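/- arXiv:1805.08637 — 4 statements merged into one kernel-verified Lean document; each statement's English description precedes it below -/
import Mathlib

section
/- Median trick: Let k be an odd natural number, let θ̂_1, …, θ̂_k be i.i.d. real-valued random variables, let I ⊆ ℝ be an interval, and suppose P(θ̂_1 ∈ I) ≥ 1 − α for some 0 < α < 1/2. Then the median θ̂ := median(θ̂_1, …, θ̂_k) satisfies P(θ̂ ∈ I) ≥ 1 − (1/2)·(4α(1−α))^{k/2}. -/
/-!
Write `k = 2t + 1`. If more than `t` of the values lie in the interval `I`, so does their median:
after sorting, `I` contains a value at or below the middle one and a value at or above it. So the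
median misses `I` only if the set `T` of indices `i` with `θ i ∈ I` has `#T ≤ t`. With
`p = P(θ i ∈ I)` and `q = 1 - p ≤ α < p`, independence gives each such `T` probability
`p ^ #T * q ^ (k - #T) ≤ p ^ t * q ^ (t + 1)`, and there are `∑_{j ≤ t} C(2t+1, j) = 4 ^ t` of them.
Finally `pq ≤ α(1 - α)` and `q ≤ α ≤ √(α(1 - α))` bound `4 ^ t (pq) ^ t q` by
`4 ^ t (α(1 - α)) ^ (t + 1/2) = (1/2) (4α(1 - α)) ^ (k/2)`.
-/

open MeasureTheory ProbabilityTheory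

/-- The median of `k` real values: the `((k+1)/2)`-th smallest among them
(for odd `k` this is the usual median). -/
noncomputable def median {k : ℕ} (v : Fin k → ℝ) : ℝ :=
  (List.insertionSort (· ≤ ·) (List.ofFn v)).getD ((k - 1) / 2) 0

open Finset

lemma insertionSort_ofFn_eq_ofFn_comp_sort {α : Type*} [LinearOrder α] {n : ℕ} (v : Fin n → α) :
    List.insertionSort (· ≤ ·) (List.ofFn v) = List.ofFn (v ∘ Tuple.sort v) :=
  ((List.perm_insertionSort _ _).trans ((Tuple.sort v).ofFn_comp_perm v).symm).eq_of_pairwise'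
    (List.pairwise_insertionSort _ _) (Tuple.monotone_sort v).sortedLE_ofFn.pairwise

lemma median_eq_comp_sort {t : ℕ} (v : Fin (2 * t + 1) → ℝ) :
    median v = (v ∘ Tuple.sort v) ⟨t, by omega⟩ := by
  have hmid : (2 * t + 1 - 1) / 2 = t := by omega
  rw [median, hmid, insertionSort_ofFn_eq_ofFn_comp_sort,
    List.getD_eq_getElem _ _ (by simp; omega), List.getElem_ofFn]

lemma Monotone.card_filter_mem_le_of_middle_notMem {α : Type*} [Preorder α] {t : ℕ}
    {g : Fin (2 * t + 1) → α} (hg : Monotone g) {I : Set α} [DecidablePred (· ∈ I)]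
    (hI : I.OrdConnected) (hmid : g ⟨t, by omega⟩ ∉ I) : #{i | g i ∈ I} ≤ t := by
  set m : Fin (2 * t + 1) := ⟨t, by omega⟩
  by_cases hhigh : ∃ i ≥ m, g i ∈ I
  · obtain ⟨i, hmi, hi⟩ := hhigh
    calc #{j | g j ∈ I} ≤ #(Ioi m) := card_le_card fun j hj => by
          rw [mem_filter] at hj
          by_contra hjm
          exact hmid (hI.out hj.2 hi ⟨hg (by simpa using hjm), hg hmi⟩)
      _ = t := by simp [Fin.card_Ioi, m]; omega
  · push Not at hhigh
    calc #{j | g j ∈ I} ≤ #(Iio m) := card_le_card fun j hj => by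
          rw [mem_filter] at hj
          by_contra hjm
          exact hhigh j (by simpa using hjm) hj.2
      _ = t := by simp [Fin.card_Iio, m]

lemma card_filter_mem_le_of_median_notMem {t : ℕ} (v : Fin (2 * t + 1) → ℝ) {I : Set ℝ}
    [DecidablePred (· ∈ I)] (hI : I.OrdConnected) (hmed : median v ∉ I) :
    #{i | v i ∈ I} ≤ t := by
  rw [median_eq_comp_sort] at hmed
  rw [← card_equiv (Tuple.sort v) (s := {i | (v ∘ Tuple.sort v) i ∈ I}) (by simp)]
  exact (Tuple.monotone_sort v).card_filter_mem_le_of_middle_notMem hI hmed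

lemma card_filter_card_le_eq_four_pow (t : ℕ) :
    #{T : Finset (Fin (2 * t + 1)) | #T ≤ t} = 4 ^ t := by
  rw [card_eq_sum_card_fiberwise (f := card) (t := range (t + 1)) fun T hT =>
    mem_range.2 (Nat.lt_succ_of_le (mem_filter.1 hT).2)]
  calc ∑ j ∈ range (t + 1), #{T ∈ {T : Finset (Fin (2 * t + 1)) | #T ≤ t} | #T = j}
      = ∑ j ∈ range (t + 1), #(powersetCard j (univ : Finset (Fin (2 * t + 1)))) :=
        sum_congr rfl fun j hj => by
          congr 1; ext T; simp only [mem_range] at hj; simp; omega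
    _ = 4 ^ t := by simpa using Nat.sum_range_choose_halfway t

lemma pow_mul_pow_sub_le_pow_mul_pow_sub {R : Type*} [CommSemiring R] [PartialOrder R]
    [IsOrderedRing R] {a b : R} (hb : 0 ≤ b) (hba : b ≤ a) {j t n : ℕ} (hjt : j ≤ t) (htn : t ≤ n) :
    a ^ j * b ^ (n - j) ≤ a ^ t * b ^ (n - t) := by
  obtain ⟨d, rfl⟩ := Nat.exists_eq_add_of_le hjt
  rw [show n - j = d + (n - (j + d)) by omega, pow_add, pow_add, mul_assoc]
  gcongr
  exact pow_nonneg (hb.trans hba) j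

section Probability

variable {Ω : Type*} [MeasurableSpace Ω] {μ : Measure Ω} [IsProbabilityMeasure μ]

lemma ofReal_one_sub_le_of_measureReal_compl_le {s : Set Ω} {b : ℝ} (h : μ.real sᶜ ≤ b) :
    ENNReal.ofReal (1 - b) ≤ μ s := by
  have hcover : 1 ≤ μ.real s + μ.real sᶜ := by
    simpa [probReal_univ] using measureReal_union_le (μ := μ) s sᶜ
  rw [← ofReal_measureReal]
  exact ENNReal.ofReal_le_ofReal (by linarith)

variable {β : Type*} [MeasurableSpace β] {s : Set β} [DecidablePred (· ∈ s)] {p : ℝ}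

lemma ProbabilityTheory.iIndepFun.measureReal_filter_mem_eq {ι : Type*} [Fintype ι]
    {f : ι → Ω → β} (hf : iIndepFun f μ) (hfm : ∀ i, AEMeasurable (f i) μ)
    (hs : MeasurableSet s) (hp : ∀ i, μ.real (f i ⁻¹' s) = p) (T : Finset ι) :
    μ.real {ω | ({i | f i ω ∈ s} : Finset ι) = T} = p ^ #T * (1 - p) ^ (Fintype.card ι - #T) := by
  classical
  have hset : {ω | ({i | f i ω ∈ s} : Finset ι) = T}
      = ⋂ i ∈ univ, f i ⁻¹' (if i ∈ T then s else sᶜ) := by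
    ext ω
    simp only [Set.mem_ofPred_eq, Finset.ext_iff, mem_filter, mem_univ, true_and,
      Set.iInter_true, Set.mem_iInter]
    refine forall_congr' fun i => ?_
    split_ifs with hi <;> simp [hi]
  have hfactor (i : ι) :
      μ.real (f i ⁻¹' if i ∈ T then s else sᶜ) = if i ∈ T then p else 1 - p := by
    split_ifs
    · exact hp i
    · rw [Set.preimage_compl, probReal_compl_eq_one_sub₀ ((hfm i).nullMeasurableSet_preimage hs),
        hp i]
  rw [hset, measureReal_def, hf.measure_inter_preimage_eq_mul _ fun i _ => ?_, ENNReal.toReal_prod]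
  · simp_rw [← measureReal_def, hfactor, prod_ite, prod_const, filter_mem_eq_inter, univ_inter,
      filter_notMem_eq_sdiff, card_univ_sdiff]
  · split_ifs
    · exact hs
    · exact hs.compl

lemma ProbabilityTheory.iIndepFun.measureReal_card_filter_mem_le {t : ℕ}
    {f : Fin (2 * t + 1) → Ω → β} (hf : iIndepFun f μ) (hfm : ∀ i, AEMeasurable (f i) μ)
    (hs : MeasurableSet s) (hp : ∀ i, μ.real (f i ⁻¹' s) = p) (hp_half : 1 - p ≤ p) :
    μ.real {ω | #{i | f i ω ∈ s} ≤ t} ≤ 4 ^ t * (p ^ t * (1 - p) ^ (t + 1)) := by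
  have hq : 0 ≤ 1 - p := by linarith [hp 0 ▸ measureReal_le_one (μ := μ) (s := f 0 ⁻¹' s)]
  let small : Finset (Finset (Fin (2 * t + 1))) := {T | #T ≤ t}
  have hcover :
      {ω | #{i | f i ω ∈ s} ≤ t} ⊆ ⋃ T ∈ small, {ω | ({i | f i ω ∈ s} : Finset _) = T} :=
    fun ω hω => Set.mem_biUnion (by simpa [small] using hω) rfl
  calc μ.real {ω | #{i | f i ω ∈ s} ≤ t}
      ≤ ∑ T ∈ small, μ.real {ω | ({i | f i ω ∈ s} : Finset _) = T} :=
        (measureReal_mono hcover (measure_ne_top _ _)).trans (measureReal_biUnion_finset_le _ _)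
    _ ≤ ∑ T ∈ small, p ^ t * (1 - p) ^ (t + 1) := sum_le_sum fun T hT => by
        rw [hf.measureReal_filter_mem_eq hfm hs hp, Fintype.card_fin]
        convert pow_mul_pow_sub_le_pow_mul_pow_sub hq hp_half (mem_filter.1 hT).2
          (by omega : t ≤ 2 * t + 1) using 3
        omega
    _ = 4 ^ t * (p ^ t * (1 - p) ^ (t + 1)) := by
        rw [sum_const, card_filter_card_le_eq_four_pow, nsmul_eq_mul, Nat.cast_pow,
          Nat.cast_ofNat]

end Probability

lemma half_mul_four_mul_rpow_odd_div_two {x : ℝ} (hx : 0 ≤ x) (t : ℕ) :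
    1 / 2 * (4 * x) ^ (((2 * t + 1 : ℕ) : ℝ) / 2) = 4 ^ t * (x ^ t * √x) := by
  have hsqrt4 : √4 = (2 : ℝ) := by
    rw [show (4 : ℝ) = 2 ^ 2 by norm_num, Real.sqrt_sq zero_le_two]
  rw [Real.rpow_div_two_eq_sqrt _ (by positivity), Real.rpow_natCast, Real.sqrt_mul zero_le_four,
    hsqrt4, pow_succ, pow_mul, mul_pow, Real.sq_sqrt hx]
  ring

lemma four_pow_mul_pow_le_half_mul_rpow {q α : ℝ} (hq : 0 ≤ q) (hqα : q ≤ α) (hα : α < 1 / 2)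
    (t : ℕ) :
    4 ^ t * ((1 - q) ^ t * q ^ (t + 1))
      ≤ 1 / 2 * (4 * α * (1 - α)) ^ (((2 * t + 1 : ℕ) : ℝ) / 2) := by
  have hx : 0 ≤ α * (1 - α) := mul_nonneg (hq.trans hqα) (by linarith)
  have hqx : q * (1 - q) ≤ α * (1 - α) := by nlinarith
  have hq_sqrt : q ≤ √(α * (1 - α)) := hqα.trans (Real.le_sqrt_of_sq_le (by nlinarith))
  calc 4 ^ t * ((1 - q) ^ t * q ^ (t + 1)) = 4 ^ t * ((q * (1 - q)) ^ t * q) := by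
        rw [mul_pow, pow_succ]; ring
    _ ≤ 4 ^ t * ((α * (1 - α)) ^ t * √(α * (1 - α))) := by gcongr; nlinarith
    _ = 1 / 2 * (4 * α * (1 - α)) ^ (((2 * t + 1 : ℕ) : ℝ) / 2) := by
        rw [mul_assoc 4 α, half_mul_four_mul_rpow_odd_div_two hx]

theorem median_trick_general
    {Ω : Type*} [MeasurableSpace Ω] (μ : Measure Ω) [IsProbabilityMeasure μ]
    (k : ℕ) (hk : Odd k) (θ : Fin k → Ω → ℝ)
    (hindep : iIndepFun θ μ)
    (hid : ∀ i j, IdentDistrib (θ i) (θ j) μ μ)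
    (I : Set ℝ) (hI : I.OrdConnected)
    (α : ℝ) (hα : α < 1 / 2)
    (hconf : ∀ i, ENNReal.ofReal (1 - α) ≤ μ {ω | θ i ω ∈ I}) :
    ENNReal.ofReal (1 - (1 / 2) * (4 * α * (1 - α)) ^ ((k : ℝ) / 2))
      ≤ μ {ω | median (fun i => θ i ω) ∈ I} := by
  classical
  obtain ⟨t, rfl⟩ := hk
  set p := μ.real (θ 0 ⁻¹' I)
  have hp (i : Fin (2 * t + 1)) : μ.real (θ i ⁻¹' I) = p :=
    congrArg ENNReal.toReal ((hid i 0).measure_mem_eq hI.measurableSet)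
  have hpα : 1 - α ≤ p := (ENNReal.ofReal_le_iff_le_toReal (measure_ne_top _ _)).1 (hconf 0)
  have hfail :
      μ.real {ω | median (fun i => θ i ω) ∈ I}ᶜ ≤ 4 ^ t * (p ^ t * (1 - p) ^ (t + 1)) :=
    (measureReal_mono fun ω hω => card_filter_mem_le_of_median_notMem _ hI hω).trans
      (hindep.measureReal_card_filter_mem_le (fun i => (hid i i).aemeasurable_fst)
        hI.measurableSet hp (by linarith))
  have hp1 : p ≤ 1 := measureReal_le_one
  have hbound := four_pow_mul_pow_le_half_mul_rpow (q := 1 - p) (by linarith) (by linarith) hα t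
  rw [sub_sub_cancel] at hbound
  exact ofReal_one_sub_le_of_measureReal_compl_le (hfail.trans hbound)

/-- **Median trick** (Proposition 2.3): if `θ 1, …, θ k` are i.i.d. real random variables,
`I ⊆ ℝ` is an interval, and each `θ i` lies in `I` with probability at least `1 - α`
for some `0 < α < 1/2`, then for odd `k` the median of `θ 1, …, θ k` lies in `I`
with probability at least `1 - (1/2) * (4 * α * (1 - α)) ^ (k/2)`. -/
theorem median_trick
    {Ω : Type*} [MeasurableSpace Ω] (μ : Measure Ω) [IsProbabilityMeasure μ]
    (k : ℕ) (hk : Odd k) (θ : Fin k → Ω → ℝ) (hmeas : ∀ i, Measurable (θ i))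
    (hindep : iIndepFun θ μ)
    (hid : ∀ i j, IdentDistrib (θ i) (θ j) μ μ)
    (I : Set ℝ) (hI : I.OrdConnected)
    (α : ℝ) (hα0 : 0 < α) (hα : α < 1 / 2)
    (hconf : ∀ i, ENNReal.ofReal (1 - α) ≤ μ {ω | θ i ω ∈ I}) :
    ENNReal.ofReal (1 - (1 / 2) * (4 * α * (1 - α)) ^ ((k : ℝ) / 2))
      ≤ μ {ω | median (fun i => θ i ω) ∈ I} :=
  median_trick_general μ k hk θ hindep hid I hI α hα hconf
end

section
/- Marcinkiewicz–Zygmund type inequality, case 1 < q ≤ 2: Let 1 < q ≤ 2, let Z ∈ L_q be a real random variable with E Z = 0, and let Z_1, …, Z_m be i.i.d. copies of Z. Then ‖(1/m)·Σ_{i=1}^m Z_i‖_q ≤ 2^{2/q − 1} · m^{−(1−1/q)} · ‖Z‖_q. -/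
open MeasureTheory ProbabilityTheory ENNReal

/-!
With `ψ(x) = |x|^(q-2) x`, the derivative of `|x|^q` is `q ψ(x)`, and `ψ` is `(q-1)`-Hölder
with constant `2^(2-q)`. Comparing derivatives in `y` gives the pointwise bound
`|x + y|^q ≤ |x|^q + q ψ(x) y + 2^(2-q) |y|^q`. For independent `X`, `Y` with `E Y = 0` the middle
term has mean `q E ψ(X) · E Y = 0`, hence `E|X + Y|^q ≤ E|X|^q + 2^(2-q) E|Y|^q`, and adding the
summands one at a time gives `E|Z_1 + ⋯ + Z_m|^q ≤ 2^(2-q) m E|Z|^q`.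
-/

namespace Real

variable {p : ℝ}

lemma rpow_sub_rpow_le_rpow_sub (hp0 : 0 ≤ p) (hp1 : p ≤ 1) {a b : ℝ} (hb : 0 ≤ b)
    (hba : b ≤ a) : a ^ p - b ^ p ≤ (a - b) ^ p := by
  have h := rpow_add_le_add_rpow (sub_nonneg.2 hba) hb hp0 hp1
  rw [sub_add_cancel] at h
  linarith

lemma rpow_add_rpow_le_two_rpow_mul (hp0 : 0 ≤ p) (hp1 : p ≤ 1) {a b : ℝ} (ha : 0 ≤ a)
    (hb : 0 ≤ b) : a ^ p + b ^ p ≤ 2 ^ (1 - p) * (a + b) ^ p := by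
  have h := (concaveOn_rpow hp0 hp1).2 ha hb (by norm_num : (0 : ℝ) ≤ 2⁻¹)
    (by norm_num : (0 : ℝ) ≤ 2⁻¹) (by norm_num)
  simp only [smul_eq_mul, ← mul_add, mul_rpow (by norm_num : (0 : ℝ) ≤ 2⁻¹)
    (add_nonneg ha hb), inv_rpow zero_le_two] at h
  rw [rpow_sub two_pos, rpow_one]
  have h2p : 0 < (2 : ℝ) ^ p := by positivity
  field_simp at h ⊢
  linarith

end Real

/-- `signedRpow p x = sign x * |x| ^ p`, the odd extension of `x ↦ x ^ p`. -/
noncomputable def signedRpow (p x : ℝ) : ℝ := |x| ^ (p - 1) * x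

section SignedRpow

variable {p : ℝ}

lemma signedRpow_of_nonneg (hp : 0 < p) {x : ℝ} (hx : 0 ≤ x) : signedRpow p x = x ^ p := by
  rcases hx.eq_or_lt with rfl | hx
  · simp [signedRpow, Real.zero_rpow hp.ne']
  · rw [signedRpow, abs_of_pos hx, ← Real.rpow_add_one hx.ne', sub_add_cancel]

lemma signedRpow_neg (p x : ℝ) : signedRpow p (-x) = -signedRpow p x := by
  simp [signedRpow]

lemma signedRpow_of_nonpos (hp : 0 < p) {x : ℝ} (hx : x ≤ 0) : signedRpow p x = -(-x) ^ p := by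
  rw [← signedRpow_of_nonneg hp (neg_nonneg.2 hx), signedRpow_neg, neg_neg]

lemma abs_signedRpow (hp : 0 < p) (x : ℝ) : |signedRpow p x| = |x| ^ p := by
  rw [← signedRpow_of_nonneg hp (abs_nonneg x), signedRpow, signedRpow, abs_mul, abs_abs,
    abs_of_nonneg (Real.rpow_nonneg (abs_nonneg x) _)]

@[fun_prop]
lemma measurable_signedRpow (p : ℝ) : Measurable (signedRpow p) := by
  unfold signedRpow; fun_prop

lemma abs_signedRpow_sub_le (hp0 : 0 < p) (hp1 : p ≤ 1) (a b : ℝ) :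
    |signedRpow p a - signedRpow p b| ≤ 2 ^ (1 - p) * |a - b| ^ p := by
  wlog hba : b ≤ a generalizing a b
  · rw [abs_sub_comm, abs_sub_comm a]
    exact this b a (le_of_not_ge hba)
  have hsame : ∀ {u v : ℝ}, 0 ≤ v → v ≤ u →
      |signedRpow p u - signedRpow p v| ≤ 2 ^ (1 - p) * |u - v| ^ p := by
    intro u v hv hvu
    rw [signedRpow_of_nonneg hp0 (hv.trans hvu), signedRpow_of_nonneg hp0 hv,
      abs_of_nonneg (sub_nonneg.2 (Real.rpow_le_rpow hv hvu hp0.le)),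
      abs_of_nonneg (sub_nonneg.2 hvu)]
    exact (Real.rpow_sub_rpow_le_rpow_sub hp0.le hp1 hv hvu).trans
      (le_mul_of_one_le_left (by positivity) (Real.one_le_rpow one_le_two (by linarith)))
  rcases le_total 0 b with hb | hb
  · exact hsame hb hba
  rcases le_total 0 a with ha | ha
  · rw [signedRpow_of_nonneg hp0 ha, signedRpow_of_nonpos hp0 hb, sub_neg_eq_add,
      abs_of_nonneg (add_nonneg (Real.rpow_nonneg ha _) (Real.rpow_nonneg (neg_nonneg.2 hb) _)),
      abs_of_nonneg (by linarith), sub_eq_add_neg]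
    exact Real.rpow_add_rpow_le_two_rpow_mul hp0.le hp1 ha (neg_nonneg.2 hb)
  · have h := hsame (neg_nonneg.2 ha) (neg_le_neg hba)
    rwa [signedRpow_neg, signedRpow_neg, neg_sub_neg, neg_sub_neg] at h

end SignedRpow

lemma hasDerivAt_abs_rpow_eq_signedRpow {q : ℝ} (hq : 1 < q) (x : ℝ) :
    HasDerivAt (fun t => |t| ^ q) (q * signedRpow (q - 1) x) x := by
  convert hasDerivAt_abs_rpow x hq using 1
  rw [signedRpow, sub_sub, one_add_one_eq_two, mul_assoc]

lemma le_apply_of_hasDerivAt_of_sign {f f' : ℝ → ℝ} {a : ℝ} (hf : ∀ t, HasDerivAt f (f' t) t)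
    (hpos : ∀ t, a < t → 0 ≤ f' t) (hneg : ∀ t, t < a → f' t ≤ 0) (t : ℝ) : f a ≤ f t := by
  have hcont : Continuous f := continuous_iff_continuousAt.2 fun t => (hf t).continuousAt
  rcases le_total a t with hat | hta
  · refine monotoneOn_of_hasDerivWithinAt_nonneg (convex_Ici a) hcont.continuousOn
      (fun s _ => (hf s).hasDerivWithinAt) (fun s hs => hpos s ?_) Set.self_mem_Ici hat hat
    simpa using hs
  · refine antitoneOn_of_hasDerivWithinAt_nonpos (convex_Iic a) hcont.continuousOn
      (fun s _ => (hf s).hasDerivWithinAt) (fun s hs => hneg s ?_) hta Set.self_mem_Iic hta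
    simpa using hs

lemma abs_add_rpow_le {q : ℝ} (hq1 : 1 < q) (hq2 : q ≤ 2) (x y : ℝ) :
    |x + y| ^ q ≤ |x| ^ q + q * signedRpow (q - 1) x * y + 2 ^ (2 - q) * |y| ^ q := by
  set ψ := signedRpow (q - 1)
  have hp : 0 < q - 1 := by linarith
  have hholder (a b : ℝ) : |ψ a - ψ b| ≤ 2 ^ (2 - q) * |a - b| ^ (q - 1) := by
    simpa [show 1 - (q - 1) = 2 - q by ring] using abs_signedRpow_sub_le hp (by linarith) a b
  let F t := |x| ^ q + q * ψ x * t + 2 ^ (2 - q) * |t| ^ q - |x + t| ^ q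
  have hF (t : ℝ) : HasDerivAt F (q * (ψ x - ψ (x + t) + 2 ^ (2 - q) * ψ t)) t :=
    ((((hasDerivAt_id t).const_mul (q * ψ x)).const_add (|x| ^ q)).add
      ((hasDerivAt_abs_rpow_eq_signedRpow hq1 t).const_mul (2 ^ (2 - q)))).sub
      ((hasDerivAt_abs_rpow_eq_signedRpow hq1 (x + t)).comp t ((hasDerivAt_id t).const_add x))
      |>.congr_deriv (by simp only [mul_one]; ring)
  have hpos (t : ℝ) (ht : 0 < t) : 0 ≤ q * (ψ x - ψ (x + t) + 2 ^ (2 - q) * ψ t) := by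
    have h := (le_abs_self _).trans (hholder (x + t) x)
    rw [add_sub_cancel_left, abs_of_pos ht, ← signedRpow_of_nonneg hp ht.le] at h
    exact mul_nonneg (by linarith) (by linarith)
  have hneg (t : ℝ) (ht : t < 0) : q * (ψ x - ψ (x + t) + 2 ^ (2 - q) * ψ t) ≤ 0 := by
    have h := (le_abs_self _).trans (hholder x (x + t))
    rw [sub_add_cancel_left, abs_neg, abs_of_neg ht, ← neg_neg ((-t) ^ (q - 1)),
      ← signedRpow_of_nonpos hp ht.le] at h
    exact mul_nonpos_of_nonneg_of_nonpos (by linarith) (by linarith)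
  have hmin := le_apply_of_hasDerivAt_of_sign hF hpos hneg y
  simp only [F, mul_zero, add_zero, abs_zero, Real.zero_rpow (by linarith : q ≠ 0), sub_self,
    sub_nonneg] at hmin
  linarith

section Moments

variable {Ω : Type*} [MeasurableSpace Ω] {μ : Measure Ω}

lemma MeasureTheory.MemLp.integrable_abs_rpow [IsFiniteMeasure μ] {f : Ω → ℝ} {p r : ℝ}
    (hf : MemLp f (ENNReal.ofReal p) μ) (hr : 0 ≤ r) (hrp : r ≤ p) :
    Integrable (fun ω => |f ω| ^ r) μ := by
  simpa [Real.norm_eq_abs, ENNReal.toReal_ofReal hr] using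
    (hf.mono_exponent (ENNReal.ofReal_le_ofReal hrp)).integrable_norm_rpow'

lemma eLpNorm_le_ofReal_mul_of_integral_abs_rpow_le {f g : Ω → ℝ} {q C : ℝ} (hq : 0 < q)
    (hC : 0 ≤ C) (hf : MemLp f (ENNReal.ofReal q) μ) (hg : MemLp g (ENNReal.ofReal q) μ)
    (h : ∫ ω, |f ω| ^ q ∂μ ≤ C ^ q * ∫ ω, |g ω| ^ q ∂μ) :
    eLpNorm f (ENNReal.ofReal q) μ ≤ ENNReal.ofReal C * eLpNorm g (ENNReal.ofReal q) μ := by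
  have hq0 : ENNReal.ofReal q ≠ 0 := by simpa using hq
  have hg0 : 0 ≤ ∫ ω, |g ω| ^ q ∂μ := integral_nonneg fun ω => by positivity
  rw [hf.eLpNorm_eq_integral_rpow_norm hq0 ofReal_ne_top,
    hg.eLpNorm_eq_integral_rpow_norm hq0 ofReal_ne_top, ← ENNReal.ofReal_mul hC,
    toReal_ofReal hq.le]
  refine ENNReal.ofReal_le_ofReal ?_
  simp only [Real.norm_eq_abs]
  calc (∫ ω, |f ω| ^ q ∂μ) ^ q⁻¹ ≤ (C ^ q * ∫ ω, |g ω| ^ q ∂μ) ^ q⁻¹ :=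
        Real.rpow_le_rpow (integral_nonneg fun ω => by positivity) h (inv_nonneg.2 hq.le)
    _ = C * (∫ ω, |g ω| ^ q ∂μ) ^ q⁻¹ := by
        rw [Real.mul_rpow (by positivity) hg0, Real.rpow_rpow_inv hC hq.ne']

lemma integral_abs_add_rpow_le [IsFiniteMeasure μ] {q : ℝ} (hq1 : 1 < q) (hq2 : q ≤ 2)
    {X Y : Ω → ℝ} (hX : MemLp X (ENNReal.ofReal q) μ) (hY : MemLp Y (ENNReal.ofReal q) μ)
    (hXY : IndepFun X Y μ) (hY0 : ∫ ω, Y ω ∂μ = 0) :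
    ∫ ω, |X ω + Y ω| ^ q ∂μ ≤ ∫ ω, |X ω| ^ q ∂μ + 2 ^ (2 - q) * ∫ ω, |Y ω| ^ q ∂μ := by
  set ψ := signedRpow (q - 1)
  have hψX : Integrable (fun ω => ψ (X ω)) μ := by
    refine (hX.integrable_abs_rpow (by linarith) (by linarith : q - 1 ≤ q)).mono'
      ((measurable_signedRpow _).comp_aemeasurable hX.1.aemeasurable).aestronglyMeasurable
      (ae_of_all _ fun ω => ?_)
    rw [Real.norm_eq_abs, abs_signedRpow (by linarith)]
  have hYint : Integrable Y μ := hY.integrable (by simpa using hq1.le)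
  have hψXY : IndepFun (fun ω => ψ (X ω)) Y μ := hXY.comp (measurable_signedRpow _) measurable_id
  have hcross : ∫ ω, ψ (X ω) * Y ω ∂μ = 0 := by
    rw [hψXY.integral_fun_mul_eq_mul_integral hψX.1 hYint.1, hY0, mul_zero]
  have hXq := hX.integrable_abs_rpow (by linarith) le_rfl
  have hYq := hY.integrable_abs_rpow (by linarith) le_rfl
  have hcrossInt : Integrable (fun ω => q * (ψ (X ω) * Y ω)) μ :=
    (hψXY.integrable_mul hψX hYint).const_mul q
  calc ∫ ω, |X ω + Y ω| ^ q ∂μ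
      ≤ ∫ ω, |X ω| ^ q + q * (ψ (X ω) * Y ω) + 2 ^ (2 - q) * |Y ω| ^ q ∂μ := by
        refine integral_mono ((hX.add hY).integrable_abs_rpow (by linarith) le_rfl)
          ((hXq.add hcrossInt).add (hYq.const_mul _)) fun ω => ?_
        simpa only [mul_assoc] using abs_add_rpow_le hq1 hq2 (X ω) (Y ω)
    _ = ∫ ω, |X ω| ^ q ∂μ + 2 ^ (2 - q) * ∫ ω, |Y ω| ^ q ∂μ := by
        rw [integral_add ?_ (hYq.const_mul _), integral_add hXq hcrossInt,
          integral_const_mul, integral_const_mul, hcross, mul_zero, add_zero]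
        exact hXq.add hcrossInt

lemma integral_abs_sum_rpow_le [IsFiniteMeasure μ] {q : ℝ} (hq1 : 1 < q) (hq2 : q ≤ 2)
    {ι : Type*} {X : ι → Ω → ℝ} (hmeas : ∀ i, Measurable (X i)) (hindep : iIndepFun X μ)
    (hLp : ∀ i, MemLp (X i) (ENNReal.ofReal q) μ) (h0 : ∀ i, ∫ ω, X i ω ∂μ = 0)
    (s : Finset ι) :
    ∫ ω, |∑ i ∈ s, X i ω| ^ q ∂μ ≤ 2 ^ (2 - q) * ∑ i ∈ s, ∫ ω, |X i ω| ^ q ∂μ := by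
  classical
  induction s using Finset.induction_on with
  | empty => simp [Real.zero_rpow (by linarith : q ≠ 0)]
  | insert a s ha ih =>
    have hind : IndepFun (fun ω => ∑ i ∈ s, X i ω) (X a) μ := by
      simpa only [Finset.sum_fn] using hindep.indepFun_finsetSum_of_notMem hmeas ha
    have hstep := integral_abs_add_rpow_le hq1 hq2 (memLp_finsetSum s fun i _ => hLp i) (hLp a)
      hind (h0 a)
    simp only [Finset.sum_insert ha, add_comm (X a _)]
    linarith

end Moments

theorem mz_inequality_low_general
    {Ω : Type*} [MeasurableSpace Ω] (μ : Measure Ω) [IsProbabilityMeasure μ]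
    (q : ℝ) (hq1 : 1 < q) (hq2 : q ≤ 2)
    (Z : Ω → ℝ) (hZ : MemLp Z (ENNReal.ofReal q) μ)
    (hZ0 : (∫ ω, Z ω ∂μ) = 0)
    (m : ℕ) (hm : 0 < m) (Zs : Fin m → Ω → ℝ) (hmeas : ∀ i, Measurable (Zs i))
    (hindep : iIndepFun Zs μ)
    (hid : ∀ i, IdentDistrib (Zs i) Z μ μ) :
    eLpNorm (fun ω => (m : ℝ)⁻¹ * ∑ i, Zs i ω) (ENNReal.ofReal q) μ
      ≤ ENNReal.ofReal ((2 : ℝ) ^ (2 / q - 1) * (m : ℝ) ^ (-(1 - 1 / q)))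
          * eLpNorm Z (ENNReal.ofReal q) μ := by
  have hLp (i : Fin m) : MemLp (Zs i) (ENNReal.ofReal q) μ := (hid i).symm.memLp_snd hZ
  have hmoment (i : Fin m) : ∫ ω, |Zs i ω| ^ q ∂μ = ∫ ω, |Z ω| ^ q ∂μ := by
    simpa using ((hid i).comp (measurable_abs.pow_const q)).integral_eq
  have hsum := integral_abs_sum_rpow_le hq1 hq2 hmeas hindep hLp
    (fun i => by rw [(hid i).integral_eq, hZ0]) Finset.univ
  simp only [hmoment, Finset.sum_const, Finset.card_univ, Fintype.card_fin, nsmul_eq_mul] at hsum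
  have hm' : (0 : ℝ) < m := by exact_mod_cast hm
  have hconst : ((2 : ℝ) ^ (2 / q - 1) * (m : ℝ) ^ (-(1 - 1 / q))) ^ q
      = (m : ℝ)⁻¹ ^ q * (2 ^ (2 - q) * m) := by
    rw [Real.mul_rpow (by positivity) (by positivity), ← Real.rpow_mul zero_le_two,
      ← Real.rpow_mul hm'.le, Real.inv_rpow hm'.le]
    have hq0 : q ≠ 0 := by linarith
    rw [show (2 / q - 1) * q = 2 - q by field_simp,
      show -(1 - 1 / q) * q = 1 - q by field_simp; ring, Real.rpow_sub hm', Real.rpow_one]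
    ring
  refine eLpNorm_le_ofReal_mul_of_integral_abs_rpow_le (by linarith) (by positivity)
    ((memLp_finsetSum _ fun i _ => hLp i).const_mul _) hZ ?_
  calc ∫ ω, |(m : ℝ)⁻¹ * ∑ i, Zs i ω| ^ q ∂μ = (m : ℝ)⁻¹ ^ q * ∫ ω, |∑ i, Zs i ω| ^ q ∂μ := by
        rw [← integral_const_mul]
        congr 1 with ω
        rw [abs_mul, abs_of_nonneg (by positivity), Real.mul_rpow (by positivity) (abs_nonneg _)]
    _ ≤ (m : ℝ)⁻¹ ^ q * (2 ^ (2 - q) * (m * ∫ ω, |Z ω| ^ q ∂μ)) := by gcongr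
    _ = _ := by rw [hconst]; ring

/-- **Marcinkiewicz–Zygmund type inequality, case `1 < q ≤ 2`** (Lemma 2.7):
for a mean-zero real random variable `Z ∈ L_q` and i.i.d. copies `Z_1, …, Z_m` of `Z`,
`‖(1/m) ∑ Z_i‖_q ≤ 2^(2/q - 1) * m^(-(1 - 1/q)) * ‖Z‖_q`. -/
theorem mz_inequality_low
    {Ω : Type*} [MeasurableSpace Ω] (μ : Measure Ω) [IsProbabilityMeasure μ]
    (q : ℝ) (hq1 : 1 < q) (hq2 : q ≤ 2)
    (Z : Ω → ℝ) (hZmeas : Measurable Z) (hZ : MemLp Z (ENNReal.ofReal q) μ)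
    (hZ0 : (∫ ω, Z ω ∂μ) = 0)
    (m : ℕ) (hm : 0 < m) (Zs : Fin m → Ω → ℝ) (hmeas : ∀ i, Measurable (Zs i))
    (hindep : iIndepFun Zs μ)
    (hid : ∀ i, IdentDistrib (Zs i) Z μ μ) :
    eLpNorm (fun ω => (m : ℝ)⁻¹ * ∑ i, Zs i ω) (ENNReal.ofReal q) μ
      ≤ ENNReal.ofReal ((2 : ℝ) ^ (2 / q - 1) * (m : ℝ) ^ (-(1 - 1 / q)))
          * eLpNorm Z (ENNReal.ofReal q) μ :=
  mz_inequality_low_general μ q hq1 hq2 Z hZ hZ0 m hm Zs hmeas hindep hid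
end

section
/- Norm bound for the centering projection: Let π be a probability measure on a measurable space G, let 1 ≤ q ≤ ∞, and let f ∈ L_q(π). Then ‖f − ∫ f dπ‖_q ≤ 2^{|2/q − 1|}·‖f‖_q, where for q = ∞ one reads 2^{|2/q−1|} = 2. -/
/-!
For finite `q = p` everything rests on a pointwise inequality: for every `m` there is a `C` with
`|x - m| ^ p ≤ 2 ^ |p - 2| * |x| ^ p + C * (x - m)` for all `x`. Taking `m = ∫ f dπ` and
integrating, the linear term disappears, and `p`-th roots turn `2 ^ |p - 2|` into
`2 ^ |2 / p - 1|`. By homogeneity `m = 1`; writing `x = 1 + u`, the inequality is trivial for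
`-1 < u < 0`, and on `u ≥ 0` and `u ≤ -1` it follows by monotonicity, the sign of the derivative
being the midpoint concavity (`p ≤ 2`) or convexity (`p ≥ 2`) inequality for `t ↦ t ^ (p - 1)`.
For `q = ∞` the triangle inequality and `|∫ f dπ| ≤ ‖f‖_∞` give the factor `2`.
-/

open MeasureTheory ENNReal

namespace Real

lemma two_rpow_one_sub_mul_add_rpow {p a b : ℝ} (ha : 0 ≤ a) (hb : 0 ≤ b) :
    2 ^ (1 - p) * (a + b) ^ p = 2 * ((1 / 2) * a + (1 / 2) * b) ^ p := by
  rw [← mul_add, mul_rpow (by norm_num) (by positivity), rpow_sub two_pos, rpow_one,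
    one_div, inv_rpow zero_le_two]
  field_simp

lemma two_rpow_one_sub_mul_add_rpow_le {p a b : ℝ} (hp : 1 ≤ p) (ha : 0 ≤ a) (hb : 0 ≤ b) :
    2 ^ (1 - p) * (a + b) ^ p ≤ a ^ p + b ^ p := by
  have := (convexOn_rpow hp).2 (Set.mem_Ici.2 ha) (Set.mem_Ici.2 hb)
    (by norm_num : (0 : ℝ) ≤ 1 / 2) (by norm_num : (0 : ℝ) ≤ 1 / 2) (by norm_num)
  simp only [smul_eq_mul] at this
  rw [two_rpow_one_sub_mul_add_rpow ha hb]
  linarith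

lemma add_rpow_le_two_rpow_one_sub_mul {p a b : ℝ} (hp₀ : 0 ≤ p) (hp₁ : p ≤ 1) (ha : 0 ≤ a)
    (hb : 0 ≤ b) : a ^ p + b ^ p ≤ 2 ^ (1 - p) * (a + b) ^ p := by
  have := (concaveOn_rpow hp₀ hp₁).2 (Set.mem_Ici.2 ha) (Set.mem_Ici.2 hb)
    (by norm_num : (0 : ℝ) ≤ 1 / 2) (by norm_num : (0 : ℝ) ≤ 1 / 2) (by norm_num)
  simp only [smul_eq_mul] at this
  rw [two_rpow_one_sub_mul_add_rpow ha hb]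
  linarith

/-- `hderiv` says that the derivative of `u ↦ a (1 + u) ^ p + b u ^ p + e u` is nonnegative. -/
lemma le_mul_one_add_rpow_add_mul_rpow_add_mul {p a b e : ℝ} (hp : 1 ≤ p)
    (hderiv : ∀ u, 0 < u → 0 ≤ p * (a * (1 + u) ^ (p - 1) + b * u ^ (p - 1)) + e)
    {u : ℝ} (hu : 0 ≤ u) : a ≤ a * (1 + u) ^ p + b * u ^ p + e * u := by
  have hp₀ : 0 < p := by linarith
  set F : ℝ → ℝ := fun u => a * (1 + u) ^ p + b * u ^ p + e * u
  have hF : ∀ u, 0 < u → HasDerivAt F (p * (a * (1 + u) ^ (p - 1) + b * u ^ (p - 1)) + e) u := by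
    intro u hu
    have h₁ := ((hasDerivAt_id u).const_add 1).rpow_const (p := p) (Or.inl (by positivity))
    have h₂ := (hasDerivAt_id u).rpow_const (p := p) (Or.inl hu.ne')
    exact (((h₁.const_mul a).add (h₂.const_mul b)).add ((hasDerivAt_id u).const_mul e)).congr_deriv
      (by simp only [id, mul_one]; ring)
  have hcont : Continuous F := by
    have := continuous_rpow_const hp₀.le
    fun_prop
  have hmono : MonotoneOn F (Set.Ici 0) := by
    refine monotoneOn_of_deriv_nonneg (convex_Ici 0) hcont.continuousOn ?_ ?_ <;>
      intro u hu <;> rw [interior_Ici] at hu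
    · exact (hF u hu).differentiableAt.differentiableWithinAt
    · rw [(hF u hu).deriv]
      exact hderiv u hu
  simpa [F, zero_rpow hp₀.ne'] using hmono Set.self_mem_Ici hu hu

lemma abs_rpow_add_mul_nonpos {p u : ℝ} (hp : 1 ≤ p) (hu₁ : -1 ≤ u) (hu₀ : u ≤ 0) :
    |u| ^ p + p * u ≤ 0 := by
  have := rpow_le_self_of_le_one (abs_nonneg u) (by rw [abs_le]; constructor <;> linarith) hp
  rw [abs_of_nonpos hu₀] at this ⊢
  nlinarith

lemma abs_rpow_add_mul_le_two_rpow_mul_abs_one_add_rpow {p : ℝ} (hp₁ : 1 ≤ p) (hp₂ : p ≤ 2)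
    (u : ℝ) : |u| ^ p + p * u ≤ 2 ^ (2 - p) * |1 + u| ^ p := by
  have hD : 1 ≤ (2 : ℝ) ^ (2 - p) := one_le_rpow one_le_two (by linarith)
  rcases le_or_gt 0 u with hu | hu
  · have hderiv (v : ℝ) (hv : 0 < v) :
        0 ≤ p * (2 ^ (2 - p) * (1 + v) ^ (p - 1) + -1 * v ^ (p - 1)) + -p := by
      have := add_rpow_le_two_rpow_one_sub_mul (p := p - 1) (by linarith) (by linarith)
        zero_le_one hv.le
      rw [one_rpow, show 1 - (p - 1) = 2 - p by ring] at this
      nlinarith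
    have hmono := le_mul_one_add_rpow_add_mul_rpow_add_mul hp₁ hderiv hu
    rw [abs_of_nonneg hu, abs_of_nonneg (by linarith)]
    nlinarith
  rcases le_or_gt u (-1) with hu₁ | hu₁
  · obtain ⟨v, hv, rfl⟩ : ∃ v, 0 ≤ v ∧ u = -(1 + v) := ⟨-u - 1, by linarith, by ring⟩
    have hderiv (w : ℝ) (hw : 0 < w) :
        0 ≤ p * (-1 * (1 + w) ^ (p - 1) + 2 ^ (2 - p) * w ^ (p - 1)) + p := by
      have hsub := rpow_add_le_add_rpow zero_le_one hw.le (p := p - 1) (by linarith) (by linarith)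
      have hw' : w ^ (p - 1) ≤ 2 ^ (2 - p) * w ^ (p - 1) :=
        le_mul_of_one_le_left (rpow_nonneg hw.le _) hD
      rw [one_rpow] at hsub
      nlinarith [mul_nonneg (by linarith : 0 ≤ p)
        (by linarith : 0 ≤ -1 * (1 + w) ^ (p - 1) + 2 ^ (2 - p) * w ^ (p - 1) + 1)]
    have hmono := le_mul_one_add_rpow_add_mul_rpow_add_mul hp₁ hderiv hv
    rw [abs_neg, abs_of_nonneg (by linarith : 0 ≤ 1 + v), show 1 + -(1 + v) = -v by ring, abs_neg,
      abs_of_nonneg hv]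
    nlinarith
  · have hmid := abs_rpow_add_mul_nonpos hp₁ hu₁.le hu.le
    have : 0 ≤ 2 ^ (2 - p) * |1 + u| ^ p := by positivity
    linarith

lemma two_rpow_mul_abs_rpow_add_mul_le_abs_one_add_rpow {p : ℝ} (hp : 2 ≤ p) (u : ℝ) :
    2 ^ (2 - p) * |u| ^ p + p * u ≤ |1 + u| ^ p := by
  have hp₁ : 1 ≤ p := by linarith
  have hD : (2 : ℝ) ^ (2 - p) ≤ 1 := rpow_le_one_of_one_le_of_nonpos one_le_two (by linarith)
  rcases le_or_gt 0 u with hu | hu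
  · have hderiv (v : ℝ) (hv : 0 < v) :
        0 ≤ p * (1 * (1 + v) ^ (p - 1) + -2 ^ (2 - p) * v ^ (p - 1)) + -p := by
      have hsup := add_rpow_le_rpow_add zero_le_one hv.le (p := p - 1) (by linarith)
      have hv' : 2 ^ (2 - p) * v ^ (p - 1) ≤ v ^ (p - 1) :=
        mul_le_of_le_one_left (rpow_nonneg hv.le _) hD
      rw [one_rpow] at hsup
      nlinarith [mul_nonneg (by linarith : 0 ≤ p)
        (by linarith : 0 ≤ 1 * (1 + v) ^ (p - 1) + -2 ^ (2 - p) * v ^ (p - 1) - 1)]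
    have hmono := le_mul_one_add_rpow_add_mul_rpow_add_mul hp₁ hderiv hu
    rw [abs_of_nonneg hu, abs_of_nonneg (by linarith)]
    nlinarith
  rcases le_or_gt u (-1) with hu₁ | hu₁
  · obtain ⟨v, hv, rfl⟩ : ∃ v, 0 ≤ v ∧ u = -(1 + v) := ⟨-u - 1, by linarith, by ring⟩
    have hderiv (w : ℝ) (hw : 0 < w) :
        0 ≤ p * (-2 ^ (2 - p) * (1 + w) ^ (p - 1) + 1 * w ^ (p - 1)) + p := by
      have := two_rpow_one_sub_mul_add_rpow_le (p := p - 1) (by linarith) zero_le_one hw.le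
      rw [one_rpow, show 1 - (p - 1) = 2 - p by ring] at this
      nlinarith
    have hmono := le_mul_one_add_rpow_add_mul_rpow_add_mul hp₁ hderiv hv
    rw [abs_neg, abs_of_nonneg (by linarith : 0 ≤ 1 + v), show 1 + -(1 + v) = -v by ring, abs_neg,
      abs_of_nonneg hv]
    nlinarith
  · have hmid := abs_rpow_add_mul_nonpos hp₁ hu₁.le hu.le
    have : 2 ^ (2 - p) * |u| ^ p ≤ |u| ^ p := mul_le_of_le_one_left (by positivity) hD
    have : 0 ≤ |1 + u| ^ p := by positivity
    linarith

lemma exists_abs_rpow_le_two_rpow_mul_abs_one_add_rpow_add_mul {p : ℝ} (hp : 1 ≤ p) :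
    ∃ C : ℝ, ∀ u : ℝ, |u| ^ p ≤ 2 ^ |p - 2| * |1 + u| ^ p + C * u := by
  rcases le_total p 2 with hp₂ | hp₂
  · refine ⟨-p, fun u => ?_⟩
    rw [abs_of_nonpos (by linarith : p - 2 ≤ 0), neg_sub]
    linarith [abs_rpow_add_mul_le_two_rpow_mul_abs_one_add_rpow hp hp₂ u]
  · refine ⟨-(2 ^ (p - 2) * p), fun u => ?_⟩
    have h := mul_le_mul_of_nonneg_left (two_rpow_mul_abs_rpow_add_mul_le_abs_one_add_rpow hp₂ u)
      (by positivity : (0 : ℝ) ≤ 2 ^ (p - 2))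
    have h₂ : (2 : ℝ) ^ (p - 2) * 2 ^ (2 - p) = 1 := by rw [← rpow_add two_pos]; norm_num
    rw [abs_of_nonneg (by linarith : 0 ≤ p - 2)]
    linear_combination h - |u| ^ p * h₂

lemma exists_abs_sub_rpow_le_two_rpow_mul_abs_rpow_add_mul {p : ℝ} (hp : 1 ≤ p) (m : ℝ) :
    ∃ C : ℝ, ∀ x : ℝ, |x - m| ^ p ≤ 2 ^ |p - 2| * |x| ^ p + C * (x - m) := by
  rcases eq_or_ne m 0 with rfl | hm
  · refine ⟨0, fun x => ?_⟩
    simpa using le_mul_of_one_le_left (by positivity) (one_le_rpow one_le_two (abs_nonneg (p - 2)))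
  obtain ⟨C, hC⟩ := exists_abs_rpow_le_two_rpow_mul_abs_one_add_rpow_add_mul hp
  refine ⟨C * |m| ^ p / m, fun x => ?_⟩
  have hscale (y : ℝ) : |y| ^ p = |m| ^ p * |y / m| ^ p := by
    rw [← mul_rpow (abs_nonneg _) (abs_nonneg _), ← abs_mul, mul_div_cancel₀ _ hm]
  have hx : x / m = 1 + (x - m) / m := by field_simp; ring
  calc |x - m| ^ p = |m| ^ p * |(x - m) / m| ^ p := hscale _
    _ ≤ |m| ^ p * (2 ^ |p - 2| * |1 + (x - m) / m| ^ p + C * ((x - m) / m)) :=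
        mul_le_mul_of_nonneg_left (hC _) (by positivity)
    _ = 2 ^ |p - 2| * |x| ^ p + C * |m| ^ p / m * (x - m) := by
        rw [hscale x, hx]
        ring

end Real

section Centering

variable {G : Type*} [MeasurableSpace G] {π : Measure G} [IsProbabilityMeasure π]

theorem integral_norm_sub_integral_rpow_le {q : ℝ≥0∞} (hq : 1 ≤ q) (hq_top : q ≠ ∞) {f : G → ℝ}
    (hf : MemLp f q π) :
    ∫ x, ‖f x - ∫ x', f x' ∂π‖ ^ q.toReal ∂π ≤ 2 ^ |q.toReal - 2| * ∫ x, ‖f x‖ ^ q.toReal ∂π := by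
  have hq₀ : q ≠ 0 := (zero_lt_one.trans_le hq).ne'
  have hp : 1 ≤ q.toReal := by simpa using ENNReal.toReal_mono hq_top hq
  set m := ∫ x, f x ∂π
  obtain ⟨C, hC⟩ := Real.exists_abs_sub_rpow_le_two_rpow_mul_abs_rpow_add_mul hp m
  have hfm : MemLp (fun x => f x - m) q π := hf.sub (memLp_const m)
  have hf_int := (hf.integrable_norm_rpow hq₀ hq_top).const_mul (2 ^ |q.toReal - 2|)
  have hfm_int := (hfm.integrable hq).const_mul C
  calc ∫ x, ‖f x - m‖ ^ q.toReal ∂π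
      ≤ ∫ x, (2 ^ |q.toReal - 2| * ‖f x‖ ^ q.toReal + C * (f x - m)) ∂π :=
        integral_mono (hfm.integrable_norm_rpow hq₀ hq_top) (hf_int.add hfm_int) fun x => by
          simpa only [Real.norm_eq_abs] using hC (f x)
    _ = 2 ^ |q.toReal - 2| * ∫ x, ‖f x‖ ^ q.toReal ∂π := by
        rw [integral_add hf_int hfm_int, integral_const_mul, integral_const_mul,
          integral_sub (hf.integrable hq) (integrable_const m)]
        simp [m]

theorem eLpNorm_sub_integral_le_two_mul {q : ℝ≥0∞} (hq : 1 ≤ q) {f : G → ℝ}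
    (hf : AEStronglyMeasurable f π) :
    eLpNorm (fun x => f x - ∫ x', f x' ∂π) q π ≤ 2 * eLpNorm f q π := by
  have hmean : ‖∫ x, f x ∂π‖ₑ ≤ eLpNorm f q π :=
    calc ‖∫ x, f x ∂π‖ₑ ≤ eLpNorm f 1 π := by
          rw [eLpNorm_one_eq_lintegral_enorm]; exact enorm_integral_le_lintegral_enorm f
      _ ≤ eLpNorm f q π := eLpNorm_le_eLpNorm_of_exponent_le hq hf
  calc eLpNorm (fun x => f x - ∫ x', f x' ∂π) q π
      ≤ eLpNorm f q π + eLpNorm (fun _ => ∫ x', f x' ∂π) q π :=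
        eLpNorm_sub_le hf aestronglyMeasurable_const hq
    _ ≤ 2 * eLpNorm f q π := by
        rw [eLpNorm_const _ (by positivity) (IsProbabilityMeasure.ne_zero π), measure_univ,
          one_rpow, mul_one, two_mul]
        gcongr

theorem eLpNorm_sub_integral_le_of_ne_top {q : ℝ≥0∞} (hq : 1 ≤ q) (hq_top : q ≠ ∞) {f : G → ℝ}
    (hf : MemLp f q π) :
    eLpNorm (fun x => f x - ∫ x', f x' ∂π) q π
      ≤ ENNReal.ofReal ((2 : ℝ) ^ |2 / q.toReal - 1|) * eLpNorm f q π := by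
  have hq₀ : q ≠ 0 := (zero_lt_one.trans_le hq).ne'
  have hp : 0 < q.toReal := ENNReal.toReal_pos hq₀ hq_top
  have hexp : (2 : ℝ) ^ |2 / q.toReal - 1| = (2 ^ |q.toReal - 2|) ^ q.toReal⁻¹ := by
    rw [← Real.rpow_mul zero_le_two, ← abs_of_pos (inv_pos.2 hp), ← abs_mul, abs_sub_comm]
    congr 2
    field_simp
  have hfm : MemLp (fun x => f x - ∫ x', f x' ∂π) q π := hf.sub (memLp_const _)
  rw [hfm.eLpNorm_eq_integral_rpow_norm hq₀ hq_top,
    hf.eLpNorm_eq_integral_rpow_norm hq₀ hq_top, ← ENNReal.ofReal_mul (by positivity), hexp,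
    ← Real.mul_rpow (by positivity) (integral_nonneg fun _ => by positivity)]
  exact ENNReal.ofReal_le_ofReal <| Real.rpow_le_rpow (integral_nonneg fun _ => by positivity)
    (integral_norm_sub_integral_rpow_le hq hq_top hf) (by positivity)

end Centering

/-- **Norm bound for the centering projection** (inequality (2.4)): for a probability
measure `π` on `G`, `1 ≤ q ≤ ∞`, and `f ∈ L_q(π)`, one has
`‖f - ∫ f dπ‖_q ≤ 2^|2/q - 1| * ‖f‖_q` (for `q = ∞` the factor is `2`; note that
`q.toReal = 0` for `q = ∞`, so `|2/q.toReal - 1| = 1` there). -/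
theorem centering_projection_norm_bound
    {G : Type*} [MeasurableSpace G] (π : Measure G) [IsProbabilityMeasure π]
    (q : ℝ≥0∞) (hq : 1 ≤ q) (f : G → ℝ) (hf : MemLp f q π) :
    eLpNorm (fun x => f x - ∫ x', f x' ∂π) q π
      ≤ ENNReal.ofReal ((2 : ℝ) ^ |2 / q.toReal - 1|) * eLpNorm f q π := by
  rcases eq_or_ne q ∞ with rfl | hq_top
  · simpa using eLpNorm_sub_integral_le_two_mul hq hf.1
  · exact eLpNorm_sub_integral_le_of_ne_top hq hq_top hf
end

section
/- Bernoulli random variables in the cone: Let 1 ≤ p < q ≤ ∞ and K ≥ 1. Let Y be a Bernoulli random variable with P(Y = 0) = 1 − a and P(Y = 1) = a for some a ∈ (0, 1/2]. If a ≥ K^{−pq/(q−p)} (where for q = ∞ the exponent pq/(q−p) is read as p) or a = 1/2, then Y ∈ 𝒴_{p,q,K}. -/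
/-!
Write `g = Y - a`. Then `|g| ≤ 1 - a` almost surely, with equality on `{Y = 1}`, an event of
probability `a`. For any `g` with `‖g‖ ≤ B` a.e. and `‖g‖ ≥ B` on a set of measure `c`, Markov's
inequality gives `B ≤ c^(-1/p) ‖g‖_p`, and integrating `|g|^q ≤ B^(q-p) |g|^p` gives
`‖g‖_q^q ≤ B^(q-p) ‖g‖_p^p`. Together they give `‖g‖_q ≤ c^(1/q - 1/p) ‖g‖_p`, and
`a^(1/q - 1/p) ≤ K` is a rewriting of `K^(-pq/(q-p)) ≤ a`. If `a = 1/2`, then `|g| = 1/2` a.s.,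
so `c = 1` works.
-/

open MeasureTheory ENNReal

/-- The exponent `pq/(q-p)` (computed via real values), read as `p` when `q = ∞`. -/
noncomputable def coneExponent (p q : ℝ≥0∞) : ℝ :=
  if q = ∞ then p.toReal else p.toReal * q.toReal / (q.toReal - p.toReal)

section Interpolation

variable {α ε : Type*} {m : MeasurableSpace α} {μ : Measure α}
  [TopologicalSpace ε] [ContinuousENorm ε]

theorem lintegral_rpow_le_mul_lintegral_rpow_of_ae_le {f : α → ℝ≥0∞} (hf : AEMeasurable f μ)
    {B : ℝ≥0∞} (hB : ∀ᵐ x ∂μ, f x ≤ B) {t s : ℝ} (ht : 0 ≤ t) (hts : t ≤ s) :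
    ∫⁻ x, f x ^ s ∂μ ≤ B ^ (s - t) * ∫⁻ x, f x ^ t ∂μ := by
  rw [← lintegral_const_mul'' _ (hf.pow_const t)]
  refine lintegral_mono_ae (hB.mono fun x hx => ?_)
  calc f x ^ s = f x ^ (s - t) * f x ^ t := by
        rw [← ENNReal.rpow_add_of_nonneg _ _ (sub_nonneg.2 hts) ht, sub_add_cancel]
    _ ≤ B ^ (s - t) * f x ^ t := by gcongr

theorem le_rpow_mul_eLpNorm_of_le_measure {g : α → ε} (hg : AEStronglyMeasurable g μ)
    {p : ℝ≥0∞} (hp0 : p ≠ 0) (hp : p ≠ ∞) {B c : ℝ≥0∞} (hc0 : c ≠ 0) (hc : c ≠ ∞)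
    (hcB : c ≤ μ {x | B ≤ ‖g x‖ₑ}) :
    B ≤ c ^ (-p⁻¹.toReal) * eLpNorm g p μ := by
  have ht : 0 < p.toReal := toReal_pos hp0 hp
  rw [← ENNReal.rpow_le_rpow_iff ht, mul_rpow_of_nonneg _ _ ht.le, ← rpow_mul, toReal_inv,
    neg_mul, inv_mul_cancel₀ ht.ne', rpow_neg_one, ← ENNReal.div_eq_inv_mul,
    ENNReal.le_div_iff_mul_le (Or.inl hc0) (Or.inl hc)]
  exact (mul_le_mul_right hcB _).trans (mul_meas_ge_le_pow_eLpNorm' μ hp0 hp hg B)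

theorem eLpNorm_le_rpow_mul_eLpNorm_of_le_measure {g : α → ε} (hg : AEStronglyMeasurable g μ)
    {p q : ℝ≥0∞} (hp0 : p ≠ 0) (hp : p ≠ ∞) (hpq : p ≤ q) {B c : ℝ≥0∞} (hc0 : c ≠ 0)
    (hc : c ≠ ∞) (hB : ∀ᵐ x ∂μ, ‖g x‖ₑ ≤ B) (hcB : c ≤ μ {x | B ≤ ‖g x‖ₑ}) :
    eLpNorm g q μ ≤ c ^ (q⁻¹.toReal - p⁻¹.toReal) * eLpNorm g p μ := by
  have hBc := le_rpow_mul_eLpNorm_of_le_measure hg hp0 hp hc0 hc hcB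
  rcases eq_or_ne q ∞ with rfl | hq
  · simpa using (eLpNormEssSup_le_of_ae_enorm_bound hB).trans hBc
  set t := p.toReal
  set s := q.toReal
  set P := eLpNorm g p μ
  have ht : 0 < t := toReal_pos hp0 hp
  have hts : t ≤ s := toReal_mono hq hpq
  have hs : 0 < s := ht.trans_le hts
  rw [← ENNReal.rpow_le_rpow_iff hs, eLpNorm_eq_eLpNorm' (hp0.bot_lt.trans_le hpq).ne' hq,
    ← lintegral_rpow_enorm_eq_rpow_eLpNorm' hs]
  calc ∫⁻ x, ‖g x‖ₑ ^ s ∂μ ≤ B ^ (s - t) * ∫⁻ x, ‖g x‖ₑ ^ t ∂μ :=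
        lintegral_rpow_le_mul_lintegral_rpow_of_ae_le hg.enorm hB ht.le hts
    _ = B ^ (s - t) * P ^ t := by
        rw [lintegral_rpow_enorm_eq_rpow_eLpNorm' ht, ← eLpNorm_eq_eLpNorm' hp0 hp]
    _ ≤ (c ^ (-t⁻¹) * P) ^ (s - t) * P ^ t := by
        gcongr
        simpa [toReal_inv] using hBc
    _ = (c ^ (s⁻¹ - t⁻¹) * P) ^ s := by
        rw [mul_rpow_of_nonneg _ _ (by linarith), mul_rpow_of_nonneg _ _ hs.le, ← rpow_mul,
          ← rpow_mul, mul_assoc, ← rpow_add_of_nonneg _ _ (by linarith) ht.le, sub_add_cancel]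
        congr 2
        field_simp
        ring
    _ = _ := by rw [toReal_inv, toReal_inv]

theorem eLpNorm_le_ofReal_mul_eLpNorm_of_le_measure {g : α → ε}
    (hg : AEStronglyMeasurable g μ) {p q : ℝ≥0∞} (hp0 : p ≠ 0) (hp : p ≠ ∞) (hpq : p ≤ q)
    {B : ℝ≥0∞} {c K : ℝ} (hc : 0 < c) (hB : ∀ᵐ x ∂μ, ‖g x‖ₑ ≤ B)
    (hcB : ENNReal.ofReal c ≤ μ {x | B ≤ ‖g x‖ₑ}) (hcK : c ^ (q⁻¹.toReal - p⁻¹.toReal) ≤ K) :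
    eLpNorm g q μ ≤ ENNReal.ofReal K * eLpNorm g p μ := by
  refine (eLpNorm_le_rpow_mul_eLpNorm_of_le_measure hg hp0 hp hpq (ofReal_pos.2 hc).ne'
    ofReal_ne_top hB hcB).trans ?_
  rw [ofReal_rpow_of_pos hc]
  gcongr

end Interpolation

-- `q⁻¹.toReal` is `0` for `q = ∞`, so this covers both branches of `coneExponent`.
theorem neg_coneExponent {p q : ℝ≥0∞} (hp0 : p ≠ 0) (hp : p ≠ ∞) (hpq : p < q) :
    -coneExponent p q = (q⁻¹.toReal - p⁻¹.toReal)⁻¹ := by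
  have ht : 0 < p.toReal := toReal_pos hp0 hp
  rw [toReal_inv, toReal_inv, coneExponent]
  split_ifs with hq
  · simp [hq]
  · have hs : 0 < q.toReal := ht.trans (toReal_strict_mono hq hpq)
    rw [inv_sub_inv hs.ne' ht.ne', inv_div, ← neg_sub q.toReal, div_neg, mul_comm]

theorem rpow_le_of_rpow_neg_coneExponent_le {p q : ℝ≥0∞} (hp0 : p ≠ 0) (hp : p ≠ ∞)
    (hpq : p < q) {K a : ℝ} (hK : 0 < K) (ha : 0 < a) (h : K ^ (-coneExponent p q) ≤ a) :
    a ^ (q⁻¹.toReal - p⁻¹.toReal) ≤ K := by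
  have hneg : q⁻¹.toReal - p⁻¹.toReal < 0 :=
    sub_neg.2 (toReal_strict_mono (inv_ne_top.2 hp0) (ENNReal.inv_lt_inv.2 hpq))
  rw [neg_coneExponent hp0 hp hpq] at h
  exact (Real.rpow_inv_le_iff_of_neg hK ha hneg).1 h

section ZeroOne

variable {Ω : Type*} [MeasurableSpace Ω] {μ : Measure Ω} {Y : Ω → ℝ}

theorem ae_eq_zero_or_eq_one_of_measure_add [IsFiniteMeasure μ] (hY : Measurable Y)
    (h : μ {ω | Y ω = 0} + μ {ω | Y ω = 1} = μ Set.univ) : ∀ᵐ ω ∂μ, Y ω = 0 ∨ Y ω = 1 := by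
  have hdisj : Disjoint {ω | Y ω = 0} {ω | Y ω = 1} :=
    Set.disjoint_left.2 fun ω (h0 : Y ω = 0) (h1 : Y ω = 1) => by simp [h0] at h1
  have h0 : MeasurableSet {ω | Y ω = 0} := hY (measurableSet_singleton 0)
  have h1 : MeasurableSet {ω | Y ω = 1} := hY (measurableSet_singleton 1)
  exact (ae_iff_measure_eq (p := fun ω => Y ω = 0 ∨ Y ω = 1) (h0.union h1).nullMeasurableSet).2
    ((measure_union hdisj h1).trans h)

theorem integral_eq_measureReal_of_ae_eq_zero_or_eq_one (hY : Measurable Y)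
    (hae : ∀ᵐ ω ∂μ, Y ω = 0 ∨ Y ω = 1) : ∫ ω, Y ω ∂μ = μ.real {ω | Y ω = 1} := by
  have h1 : MeasurableSet {ω | Y ω = 1} := hY (measurableSet_singleton 1)
  rw [← integral_indicator_one h1]
  refine integral_congr_ae (hae.mono fun ω hω => ?_)
  rcases hω with h | h <;> simp [Set.indicator, h]

end ZeroOne

theorem abs_sub_le_one_sub_of_eq_zero_or_eq_one {y a : ℝ} (hy : y = 0 ∨ y = 1) (ha0 : 0 ≤ a)
    (ha1 : a ≤ 1 / 2) : |y - a| ≤ 1 - a := by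
  rcases hy with rfl | rfl
  · rw [zero_sub, abs_neg, abs_of_nonneg ha0]
    linarith
  · rw [abs_of_nonneg (by linarith)]

/-- **Bernoulli random variables in the cone** (Lemma 3.8): let `1 ≤ p < q ≤ ∞`
and `K ≥ 1`, and let `Y` be a Bernoulli random variable with `P(Y = 0) = 1 - a`,
`P(Y = 1) = a` for some `a ∈ (0, 1/2]`. If `a ≥ K^(-pq/(q-p))` (exponent read as
`p` for `q = ∞`) or `a = 1/2`, then `Y ∈ 𝒴_{p,q,K}`, i.e. `Y ∈ L_q` and
`‖Y - E Y‖_q ≤ K * ‖Y - E Y‖_p`. -/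
theorem bernoulli_mem_cone
    {Ω : Type*} [MeasurableSpace Ω] (μ : Measure Ω) [IsProbabilityMeasure μ]
    (p q : ℝ≥0∞) (hp : 1 ≤ p) (hpq : p < q) (K : ℝ) (hK : 1 ≤ K)
    (a : ℝ) (ha0 : 0 < a) (ha1 : a ≤ 1 / 2)
    (Y : Ω → ℝ) (hYmeas : Measurable Y)
    (h0 : μ {ω | Y ω = 0} = ENNReal.ofReal (1 - a))
    (h1 : μ {ω | Y ω = 1} = ENNReal.ofReal a)
    (hcond : K ^ (-coneExponent p q) ≤ a ∨ a = 1 / 2) :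
    MemLp Y q μ ∧
      eLpNorm (fun ω => Y ω - ∫ ω', Y ω' ∂μ) q μ
        ≤ ENNReal.ofReal K * eLpNorm (fun ω => Y ω - ∫ ω', Y ω' ∂μ) p μ := by
  have hp0 : p ≠ 0 := (one_pos.trans_le hp).ne'
  have hae : ∀ᵐ ω ∂μ, Y ω = 0 ∨ Y ω = 1 := by
    refine ae_eq_zero_or_eq_one_of_measure_add hYmeas ?_
    rw [h0, h1, ← ofReal_add (by linarith) ha0.le, measure_univ]
    norm_num
  have hmean : ∫ ω, Y ω ∂μ = a := by
    rw [integral_eq_measureReal_of_ae_eq_zero_or_eq_one hYmeas hae, measureReal_def, h1,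
      toReal_ofReal ha0.le]
  have hB : ∀ᵐ ω ∂μ, ‖Y ω - a‖ₑ ≤ ENNReal.ofReal (1 - a) := hae.mono fun ω hω => by
    rw [Real.enorm_eq_ofReal_abs]
    exact ofReal_le_ofReal (abs_sub_le_one_sub_of_eq_zero_or_eq_one hω ha0.le ha1)
  refine ⟨MemLp.of_bound hYmeas.aestronglyMeasurable 1 (hae.mono fun ω hω => ?_), ?_⟩
  · rcases hω with h | h <;> simp [h]
  rw [hmean]
  have hg := (hYmeas.sub_const a).aestronglyMeasurable (μ := μ)
  rcases hcond with hKa | rfl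
  · refine eLpNorm_le_ofReal_mul_eLpNorm_of_le_measure hg hp0 hpq.ne_top hpq.le ha0 hB
      (h1 ▸ measure_mono fun ω (hω : Y ω = 1) => ?_)
      (rpow_le_of_rpow_neg_coneExponent_le hp0 hpq.ne_top hpq (one_pos.trans_le hK) ha0 hKa)
    simp [hω, Real.enorm_eq_ofReal_abs, abs_of_nonneg (by linarith : 0 ≤ 1 - a)]
  · refine eLpNorm_le_ofReal_mul_eLpNorm_of_le_measure hg hp0 hpq.ne_top hpq.le one_pos hB ?_
      (by rwa [Real.one_rpow])
    rw [ofReal_one, ← measure_univ (μ := μ)]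
    refine measure_mono_ae (hae.mono fun ω hω _ =>
      show ENNReal.ofReal (1 - 1 / 2) ≤ ‖Y ω - 1 / 2‖ₑ from ?_)
    rcases hω with h | h <;> norm_num [h, Real.enorm_eq_ofReal_abs]
end
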